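/- Let n ≥ 1 be an integer and let α, β > 0. Then ∫_{ℝⁿ} |γ_{n,α}(x) − γ_{n,β}(x)| dx ≤ C √n |β/α − 1|, where C > 0 is a universal constant. -/

import Mathlib

/-! If `ns² < 1/2`, where `s = β/α − 1`, Cauchy–Schwarz bounds the `L¹` distance by the square
root of the χ²-divergence `∫ γ_β² / γ_α − 1`. For gaussians the integrand is again a multiple of a
gaussian, so the divergence equals `(1 − s²)^{−n/2} − 1 ≤ e^{ns²} − 1 ≤ 2ns²`. If `ns² ≥ 1/2`, the
trivial bound `2` is already at most `3 √n |s|`. -/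

open MeasureTheory Real Set Filter
open scoped ENNReal NNReal

noncomputable section

/-- The gaussian density `γ_{n,v}(x) = (2πv)^{−n/2} exp(−|x|²/(2v))` on ℝⁿ. -/
def gaussDensity (n : ℕ) (v : ℝ) (x : EuclideanSpace ℝ (Fin n)) : ℝ :=
  (2 * π * v) ^ (-(n : ℝ) / 2) * Real.exp (-‖x‖ ^ 2 / (2 * v))

section ChiSquare

variable {X : Type*} [MeasurableSpace X] {μ : Measure X} {f g : X → ℝ}

theorem integral_abs_sub_le_integral_add (hf₀ : 0 ≤ f) (hg₀ : 0 ≤ g) (hf : Integrable f μ)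
    (hg : Integrable g μ) : ∫ x, |f x - g x| ∂μ ≤ ∫ x, f x ∂μ + ∫ x, g x ∂μ := by
  rw [← integral_add hf hg]
  refine integral_mono (hf.sub hg).abs (hf.add hg) fun x => ?_
  exact (abs_sub _ _).trans_eq (by rw [abs_of_nonneg (hf₀ x), abs_of_nonneg (hg₀ x)])

/-- Cauchy–Schwarz against `g`: `∫ |g - f| = ∫ (|g - f| / √g) √g`, and the square of the first
factor integrates to the χ²-divergence `∫ f² / g - 1`. -/
theorem integral_abs_sub_le_sqrt_chiSquare (hg₀ : ∀ x, 0 < g x) (hf : Integrable f μ)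
    (hg : Integrable g μ) (hfg : Integrable (fun x => f x ^ 2 / g x) μ)
    (hf₁ : ∫ x, f x ∂μ = 1) (hg₁ : ∫ x, g x ∂μ = 1) :
    ∫ x, |g x - f x| ∂μ ≤ √(∫ x, f x ^ 2 / g x ∂μ - 1) := by
  set h : X → ℝ := fun x => |g x - f x| / √(g x)
  have hsqrt_ne : ∀ x, √(g x) ≠ 0 := fun x => (Real.sqrt_pos.2 (hg₀ x)).ne'
  have hh_sq : ∀ x, h x ^ 2 = g x - 2 * f x + f x ^ 2 / g x := by
    intro x
    have := (hg₀ x).ne'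
    simp only [h, div_pow, sq_abs, Real.sq_sqrt (hg₀ x).le]
    field_simp
    ring
  have hg_sq : ∀ x, √(g x) ^ 2 = g x := fun x => Real.sq_sqrt (hg₀ x).le
  have hχ_int : Integrable (fun x => g x - 2 * f x + f x ^ 2 / g x) μ :=
    (hg.sub (hf.const_mul 2)).add hfg
  have hχ : ∫ x, (g x - 2 * f x + f x ^ 2 / g x) ∂μ = ∫ x, f x ^ 2 / g x ∂μ - 1 := by
    rw [integral_add (f := fun x => g x - 2 * f x) (hg.sub (hf.const_mul 2)) hfg,
      integral_sub hg (hf.const_mul 2), integral_const_mul, hf₁, hg₁]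
    ring
  have hh_int : Integrable (fun x => h x ^ 2) μ := by simpa only [hh_sq] using hχ_int
  have hh_meas : AEStronglyMeasurable h μ :=
    ((hg.1.sub hf.1).norm.aemeasurable.div hg.1.aemeasurable.sqrt).aestronglyMeasurable
  have hh : MemLp h (ENNReal.ofReal 2) μ := by
    simpa using (memLp_two_iff_integrable_sq hh_meas).2 hh_int
  have hsg : MemLp (fun x => √(g x)) (ENNReal.ofReal 2) μ := by
    simpa using (memLp_two_iff_integrable_sq hg.1.aemeasurable.sqrt.aestronglyMeasurable).2
      (by simpa only [hg_sq] using hg)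
  have hCS := integral_mul_le_Lp_mul_Lq_of_nonneg Real.HolderConjugate.two_two
    (Eventually.of_forall fun x => by positivity)
    (Eventually.of_forall fun x => Real.sqrt_nonneg _) hh hsg
  simp only [Real.rpow_two, hh_sq, hg_sq, h, div_mul_cancel₀ _ (hsqrt_ne _)] at hCS
  rwa [hχ, hg₁, Real.one_rpow, mul_one, ← Real.sqrt_eq_rpow] at hCS

end ChiSquare

theorem integrable_exp_neg_mul_sq_norm {V : Type*} [NormedAddCommGroup V]
    [InnerProductSpace ℝ V] [FiniteDimensional ℝ V] [MeasurableSpace V] [BorelSpace V] {b : ℝ}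
    (hb : 0 < b) :
    Integrable (fun v : V => Real.exp (-b * ‖v‖ ^ 2)) :=
  .of_integral_ne_zero <| by
    rw [GaussianFourier.integral_rexp_neg_mul_sq_norm hb]
    exact (rpow_pos_of_pos (div_pos pi_pos hb) _).ne'

namespace gaussDensity

variable {n : ℕ} {v : ℝ}

theorem eq_mul_exp (x : EuclideanSpace ℝ (Fin n)) :
    gaussDensity n v x = (2 * π * v) ^ (-(n : ℝ) / 2) * Real.exp (-(2 * v)⁻¹ * ‖x‖ ^ 2) := by
  rw [gaussDensity, neg_mul, ← div_eq_inv_mul, neg_div, neg_div]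

theorem pos (hv : 0 < v) (x : EuclideanSpace ℝ (Fin n)) : 0 < gaussDensity n v x := by
  unfold gaussDensity
  have := pi_pos
  positivity

theorem integrable (hv : 0 < v) : Integrable (gaussDensity n v) := by
  simpa only [← eq_mul_exp] using
    (integrable_exp_neg_mul_sq_norm (V := EuclideanSpace ℝ (Fin n))
      (inv_pos.2 (by positivity : 0 < 2 * v))).const_mul ((2 * π * v) ^ (-(n : ℝ) / 2))

theorem integral_eq_one (hv : 0 < v) : ∫ x, gaussDensity n v x = 1 := by
  have h2πv : 0 < 2 * π * v := by have := pi_pos; positivity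
  simp_rw [eq_mul_exp]
  rw [integral_const_mul, GaussianFourier.integral_rexp_neg_mul_sq_norm (by positivity),
    finrank_euclideanSpace_fin, div_inv_eq_mul, ← mul_assoc, mul_comm π 2, ← rpow_add h2πv,
    neg_div, neg_add_cancel, rpow_zero]

theorem sq_div {α β : ℝ} (hα : 0 < α) (hβ : 0 < β) (h : β < 2 * α)
    (x : EuclideanSpace ℝ (Fin n)) :
    gaussDensity n β x ^ 2 / gaussDensity n α x =
      ((1 - (β / α - 1) ^ 2)⁻¹) ^ ((n : ℝ) / 2) * gaussDensity n (α * β / (2 * α - β)) x := by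
  have h2π : 0 ≤ 2 * π := by have := pi_pos; positivity
  have hγ : 0 < 2 * α - β := by linarith
  have hK : 1 - (β / α - 1) ^ 2 = β * (2 * α - β) / α ^ 2 := by
    field_simp
    ring
  -- side conditions for `mul_rpow` and `div_rpow` in the `simp` call below
  have hα' := hα.le
  have hβ' := hβ.le
  have hγ' := hγ.le
  have hαβ : 0 ≤ α * β := by positivity
  have hβγ : 0 ≤ β * (2 * α - β) := by positivity
  have hα2 : 0 ≤ α ^ 2 := by positivity
  rw [hK, inv_div, gaussDensity, gaussDensity, gaussDensity, mul_pow, mul_div_mul_comm,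
    ← mul_assoc]
  congr 1
  · simp only [neg_div _ (n : ℝ), rpow_neg, mul_rpow, div_rpow, ← rpow_pow_comm, mul_nonneg,
      div_nonneg, *]
    field_simp
  · rw [sq, ← exp_add, ← exp_sub]
    congr 1
    field_simp
    ring

theorem integrable_sq_div {α β : ℝ} (hα : 0 < α) (hβ : 0 < β) (h : β < 2 * α) :
    Integrable (fun x => gaussDensity n β x ^ 2 / gaussDensity n α x) := by
  have hw : 0 < α * β / (2 * α - β) := div_pos (mul_pos hα hβ) (by linarith)
  simpa only [sq_div hα hβ h] using (integrable hw).const_mul _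

theorem integral_sq_div {α β : ℝ} (hα : 0 < α) (hβ : 0 < β) (h : β < 2 * α) :
    ∫ x, gaussDensity n β x ^ 2 / gaussDensity n α x =
      ((1 - (β / α - 1) ^ 2)⁻¹) ^ ((n : ℝ) / 2) := by
  have hw : 0 < α * β / (2 * α - β) := div_pos (mul_pos hα hβ) (by linarith)
  simp_rw [sq_div hα hβ h]
  rw [integral_const_mul, integral_eq_one hw, mul_one]

end gaussDensity

theorem inv_one_sub_le_one_add_two_mul {u : ℝ} (hu₀ : 0 ≤ u) (hu : u ≤ 1 / 2) :
    (1 - u)⁻¹ ≤ 1 + 2 * u := by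
  rw [inv_le_iff_one_le_mul₀ (by linarith)]
  nlinarith

theorem inv_one_sub_rpow_le {u p : ℝ} (hu₀ : 0 ≤ u) (hu : u ≤ 1 / 2) (hp : 0 ≤ p)
    (hup : 2 * u * p ≤ 1 / 2) : ((1 - u)⁻¹) ^ p ≤ 1 + 4 * u * p :=
  calc ((1 - u)⁻¹) ^ p
      ≤ (exp (2 * u)) ^ p := by
        refine rpow_le_rpow (inv_nonneg.2 (by linarith)) ?_ hp
        linarith [inv_one_sub_le_one_add_two_mul hu₀ hu, add_one_le_exp (2 * u)]
    _ = exp (2 * u * p) := by rw [← exp_mul]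
    _ ≤ (1 - 2 * u * p)⁻¹ := by
        simpa using exp_bound_div_one_sub_of_interval (by positivity) (by linarith)
    _ ≤ 1 + 4 * u * p := by
        linarith [inv_one_sub_le_one_add_two_mul (by positivity) hup]

/-- Klartag, Lemma 4.8: the `L¹`-distance of two centered gaussian densities on ℝⁿ with
covariances `α·Id` and `β·Id` is at most `C √n |β/α − 1|`. -/
theorem gaussian_L1_distance :
    ∃ C : ℝ, 0 < C ∧
      ∀ (n : ℕ), 1 ≤ n → ∀ α β : ℝ, 0 < α → 0 < β →
        ∫ x : EuclideanSpace ℝ (Fin n), |gaussDensity n α x - gaussDensity n β x| ≤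
          C * Real.sqrt n * |β / α - 1| := by
  refine ⟨3, by norm_num, fun n hn α β hα hβ => ?_⟩
  set s := β / α - 1
  rw [mul_assoc, ← sqrt_sq_eq_abs s, ← sqrt_mul n.cast_nonneg]
  rcases lt_or_ge (n * s ^ 2) (1 / 2) with hsmall | hlarge
  · have hs2 : s ^ 2 < 1 / 2 := by
      have : (1 : ℝ) ≤ n := by exact_mod_cast hn
      nlinarith
    have hβ2 : β < 2 * α := by
      have : β / α < 2 := by nlinarith
      rwa [div_lt_iff₀ hα] at this
    have hK := inv_one_sub_rpow_le (sq_nonneg s) hs2.le (by positivity : (0 : ℝ) ≤ n / 2)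
      (by linarith)
    calc _ ≤ √((∫ x, gaussDensity n β x ^ 2 / gaussDensity n α x) - 1) :=
          integral_abs_sub_le_sqrt_chiSquare (gaussDensity.pos hα) (gaussDensity.integrable hβ)
            (gaussDensity.integrable hα) (gaussDensity.integrable_sq_div hα hβ hβ2)
            (gaussDensity.integral_eq_one hβ) (gaussDensity.integral_eq_one hα)
      _ ≤ √(3 ^ 2 * (n * s ^ 2)) := by
          rw [gaussDensity.integral_sq_div hα hβ hβ2]
          exact sqrt_le_sqrt (by nlinarith)
      _ = 3 * √(n * s ^ 2) := by rw [sqrt_mul (by norm_num), sqrt_sq (by norm_num)]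
  · calc _ ≤ (∫ x, gaussDensity n α x) + ∫ x, gaussDensity n β x :=
          integral_abs_sub_le_integral_add (fun x => (gaussDensity.pos hα x).le)
            (fun x => (gaussDensity.pos hβ x).le) (gaussDensity.integrable hα)
            (gaussDensity.integrable hβ)
      _ = 3 * (2 / 3) := by
          rw [gaussDensity.integral_eq_one hα, gaussDensity.integral_eq_one hβ]
          norm_num
      _ ≤ 3 * √(n * s ^ 2) := by
          gcongr
          exact le_sqrt_of_sq_le (by linarith)
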